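/- arXiv:0712.0214 — 5 statements merged into one kernel-verified Lean document; each statement's English description precedes it below -/
import Mathlib

section
/- Suppose u_1,...,u_n ∈ ℝ^m satisfy ∑_{k=1}^n |⟨u_k, x⟩|^p = ⟨x,x⟩^{p/2} for all x ∈ ℝ^m, and suppose there exist real numbers ω_1,...,ω_n, not all zero, with ∑_{k=1}^n ω_k |⟨u_k, x⟩|^p = 0 for all x. Then there exist vectors v_1,...,v_{n-1} ∈ ℝ^m with ∑_{k=1}^{n-1} |⟨v_k, x⟩|^p = ⟨x,x⟩^{p/2} for all x ∈ ℝ^m. -/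
/-!
Normalise the dependence so that its largest coefficient `ω k₀` is positive and subtract
`(ω k₀)⁻¹` times it from the frame identity: this gives `∑ c_k |⟨u_k, x⟩|^p = ‖x‖^p` with
`c_k = 1 - ω_k / ω_{k₀} ≥ 0` and `c_{k₀} = 0`. The weights are absorbed into the vectors as
`v_k = c_k^{1/p} u_k`, and the vector `u_{k₀}` is dropped.
-/

open Finset

theorem exists_nonneg_weights_of_dependence_of_pos {ι α : Type*} [Fintype ι]
    {f : ι → α → ℝ} {g : α → ℝ} (hsum : ∀ x, ∑ k, f k x = g x)
    {ω : ι → ℝ} (hdep : ∀ x, ∑ k, ω k * f k x = 0) {k₁ : ι} (hk₁ : 0 < ω k₁) :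
    ∃ (c : ι → ℝ) (k₀ : ι), (∀ k, 0 ≤ c k) ∧ c k₀ = 0 ∧ ∀ x, ∑ k, c k * f k x = g x := by
  have : Nonempty ι := ⟨k₁⟩
  obtain ⟨k₀, hk₀⟩ := Finite.exists_max ω
  have hω₀ : 0 < ω k₀ := hk₁.trans_le (hk₀ k₁)
  refine ⟨fun k => 1 - ω k / ω k₀, k₀, fun k => sub_nonneg.2 ((div_le_one hω₀).2 (hk₀ k)),
    by simp [hω₀.ne'], fun x => ?_⟩
  calc ∑ k, (1 - ω k / ω k₀) * f k x = ∑ k, f k x - (ω k₀)⁻¹ * ∑ k, ω k * f k x := by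
        rw [mul_sum, ← sum_sub_distrib]
        congr 1 with k
        ring
    _ = g x := by rw [hsum, hdep, mul_zero, sub_zero]

theorem exists_nonneg_weights_of_dependence {ι α : Type*} [Fintype ι]
    {f : ι → α → ℝ} {g : α → ℝ} (hsum : ∀ x, ∑ k, f k x = g x)
    {ω : ι → ℝ} (hω : ω ≠ 0) (hdep : ∀ x, ∑ k, ω k * f k x = 0) :
    ∃ (c : ι → ℝ) (k₀ : ι), (∀ k, 0 ≤ c k) ∧ c k₀ = 0 ∧ ∀ x, ∑ k, c k * f k x = g x := by
  obtain ⟨k, hk⟩ := Function.ne_iff.mp hω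
  rcases hk.lt_or_gt with hneg | hpos
  · refine exists_nonneg_weights_of_dependence_of_pos hsum (ω := -ω) (fun x => ?_)
      (k₁ := k) (by simpa using hneg)
    simp [sum_neg_distrib, hdep x]
  · exact exists_nonneg_weights_of_dependence_of_pos hsum hdep hpos

theorem abs_rpow_inv_smul_dotProduct_pow {ι : Type*} [Fintype ι] {p : ℕ} (hp : p ≠ 0)
    {c : ℝ} (hc : 0 ≤ c) (u x : ι → ℝ) :
    |(c ^ (p : ℝ)⁻¹ • u) ⬝ᵥ x| ^ p = c * |u ⬝ᵥ x| ^ p := by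
  rw [smul_dotProduct, smul_eq_mul, abs_mul, mul_pow, abs_of_nonneg (Real.rpow_nonneg hc _),
    Real.rpow_inv_natCast_pow hc hp]

theorem exists_shorter_of_nonneg_weights {ι : Type*} [Fintype ι] {n p : ℕ} (hp : p ≠ 0)
    {u : Fin (n + 1) → ι → ℝ} {g : (ι → ℝ) → ℝ} {c : Fin (n + 1) → ℝ} {k₀ : Fin (n + 1)}
    (hc : ∀ k, 0 ≤ c k) (hck₀ : c k₀ = 0) (hsum : ∀ x, ∑ k, c k * |u k ⬝ᵥ x| ^ p = g x) :
    ∃ v : Fin n → ι → ℝ, ∀ x, ∑ k, |v k ⬝ᵥ x| ^ p = g x := by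
  refine ⟨fun j => c (k₀.succAbove j) ^ (p : ℝ)⁻¹ • u (k₀.succAbove j), fun x => ?_⟩
  rw [← hsum x, Fin.sum_univ_succAbove _ k₀, hck₀, zero_mul, zero_add]
  exact sum_congr rfl fun j _ => abs_rpow_inv_smul_dotProduct_pow hp (hc _) _ _

theorem stmt1_general (m n p : ℕ) (hp0 : 0 < p)
    (u : Fin n → Fin m → ℝ)
    (hframe : ∀ x : Fin m → ℝ,
      ∑ k, |∑ i, u k i * x i| ^ p = (∑ i, x i ^ 2) ^ (p / 2))
    (ω : Fin n → ℝ) (hω : ω ≠ 0)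
    (hdep : ∀ x : Fin m → ℝ, ∑ k, ω k * |∑ i, u k i * x i| ^ p = 0) :
    ∃ v : Fin (n - 1) → Fin m → ℝ,
      ∀ x : Fin m → ℝ,
        ∑ k, |∑ i, v k i * x i| ^ p = (∑ i, x i ^ 2) ^ (p / 2) := by
  obtain ⟨c, k₀, hc, hck₀, hcsum⟩ :=
    exists_nonneg_weights_of_dependence (f := fun k x => |u k ⬝ᵥ x| ^ p) hframe hω hdep
  obtain ⟨n, rfl⟩ := Nat.exists_eq_add_one.2 k₀.pos
  exact exists_shorter_of_nonneg_weights hp0.ne' hc hck₀ hcsum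

/-- A linear dependence among the functions `|⟨u k,·⟩|^p` allows an isometric-embedding
frame of length `n` to be shortened to one of length `n-1`. -/
theorem stmt1 (m n p : ℕ) (hm : 2 ≤ m) (hn : 1 ≤ n) (hp : Even p) (hp0 : 0 < p)
    (u : Fin n → Fin m → ℝ)
    (hframe : ∀ x : Fin m → ℝ,
      ∑ k, |∑ i, u k i * x i| ^ p = (∑ i, x i ^ 2) ^ (p / 2))
    (ω : Fin n → ℝ) (hω : ω ≠ 0)
    (hdep : ∀ x : Fin m → ℝ, ∑ k, ω k * |∑ i, u k i * x i| ^ p = 0) :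
    ∃ v : Fin (n - 1) → Fin m → ℝ,
      ∀ x : Fin m → ℝ,
        ∑ k, |∑ i, v k i * x i| ^ p = (∑ i, x i ^ 2) ^ (p / 2) :=
  stmt1_general m n p hp0 u hframe ω hω hdep
end

section
/- If n is the minimal number such that there exists an isometric embedding of ℓ₂^m into ℓ_p^n with frame (u_k)_{k=1}^n (that is, ∑_{k=1}^n |⟨u_k,x⟩|^p = ⟨x,x⟩^{p/2} for all x ∈ ℝ^m, and no such identity holds with n−1 vectors), then the functions x ↦ |⟨u_k,x⟩|^p, k = 1,...,n, are linearly independent in the space of real-valued functions on ℝ^m. -/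
/-!
If the functions `x ↦ |⟨u k, x⟩|^p` satisfied a nontrivial linear relation `∑ g k φ k = 0`, normalise
it by a coefficient of largest modulus, `c = g / g k₀`. Then `w = 1 - c` is a family of nonnegative
weights with `w k₀ = 0` and `∑ w k φ k = ∑ φ k`. Since `|⟨t^{1/p} u, x⟩|^p = t |⟨u, x⟩|^p` for `t ≥ 0`,
the vectors `w k ^ (1/p) • u k` form a frame again, and dropping the vanishing `k₀`-th one leaves a
frame with `n - 1` vectors, against minimality.
-/

open Finset

section Weights

variable {𝕜 M ι : Type*} [Field 𝕜] [LinearOrder 𝕜] [IsStrictOrderedRing 𝕜]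
  [AddCommGroup M] [Module 𝕜 M] [Fintype ι]

theorem exists_nonneg_weights_of_not_linearIndependent {φ : ι → M}
    (h : ¬ LinearIndependent 𝕜 φ) :
    ∃ w : ι → 𝕜, ∃ k₀, (∀ k, 0 ≤ w k) ∧ w k₀ = 0 ∧ ∑ k, w k • φ k = ∑ k, φ k := by
  rw [Fintype.not_linearIndependent_iff] at h
  obtain ⟨g, hg, i, hi⟩ := h
  obtain ⟨k₀, -, hk₀⟩ := exists_max_image univ (fun k => |g k|) ⟨i, mem_univ i⟩
  have hgk₀ : g k₀ ≠ 0 :=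
    abs_pos.mp ((abs_pos.mpr hi).trans_le (hk₀ i (mem_univ i)))
  refine ⟨fun k => 1 - g k / g k₀, k₀, fun k => ?_, by simp [hgk₀], ?_⟩
  · have hle : |g k / g k₀| ≤ 1 := by
      rw [abs_div, div_le_one (abs_pos.mpr hgk₀)]
      exact hk₀ k (mem_univ k)
    exact sub_nonneg.mpr ((le_abs_self _).trans hle)
  · simp only [sub_smul, one_smul, sum_sub_distrib, div_eq_mul_inv, mul_comm (g _), mul_smul,
      ← smul_sum, hg, smul_zero, sub_zero]

end Weights

theorem abs_rpow_inv_mul_pow {t : ℝ} (ht : 0 ≤ t) {p : ℕ} (hp : p ≠ 0) (a : ℝ) :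
    |t ^ (p⁻¹ : ℝ) * a| ^ p = t * |a| ^ p := by
  rw [abs_mul, abs_of_nonneg (Real.rpow_nonneg ht _), mul_pow, ← Real.rpow_natCast,
    ← Real.rpow_mul ht, inv_mul_cancel₀ (by exact_mod_cast hp), Real.rpow_one]

def IsIsometricFrame {ι : Type*} [Fintype ι] {m : ℕ} (p : ℕ) (u : ι → Fin m → ℝ) : Prop :=
  ∀ x : Fin m → ℝ, ∑ k, |∑ i, u k i * x i| ^ p = (∑ i, x i ^ 2) ^ (p / 2)

namespace IsIsometricFrame

variable {ι : Type*} [Fintype ι] {m p : ℕ} {u : ι → Fin m → ℝ}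

theorem reweight (hu : IsIsometricFrame p u) (hp : p ≠ 0) {w : ι → ℝ} (hw : ∀ k, 0 ≤ w k)
    (hsum : ∑ k, w k • (fun x : Fin m → ℝ => |∑ i, u k i * x i| ^ p)
      = ∑ k, fun x : Fin m → ℝ => |∑ i, u k i * x i| ^ p) :
    IsIsometricFrame p (fun k i => w k ^ (p⁻¹ : ℝ) * u k i) := by
  intro x
  have hx := congrFun hsum x
  simp only [Finset.sum_apply, Pi.smul_apply, smul_eq_mul] at hx
  simp_rw [mul_assoc, ← mul_sum, abs_rpow_inv_mul_pow (hw _) hp, hx, hu x]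

theorem comp_succAbove {n : ℕ} {u : Fin (n + 1) → Fin m → ℝ} (hu : IsIsometricFrame p u)
    (hp : p ≠ 0) (k₀ : Fin (n + 1)) (hk₀ : u k₀ = 0) :
    IsIsometricFrame p (u ∘ k₀.succAbove) := by
  intro x
  rw [← hu x, Fin.sum_univ_succAbove _ k₀]
  simp [hk₀, hp]

end IsIsometricFrame

theorem stmt2_general (m n p : ℕ) (hp0 : 0 < p)
    (u : Fin n → Fin m → ℝ)
    (hframe : ∀ x : Fin m → ℝ,
      ∑ k, |∑ i, u k i * x i| ^ p = (∑ i, x i ^ 2) ^ (p / 2))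
    (hmin : ¬ ∃ v : Fin (n - 1) → Fin m → ℝ,
      ∀ x : Fin m → ℝ,
        ∑ k, |∑ i, v k i * x i| ^ p = (∑ i, x i ^ 2) ^ (p / 2)) :
    LinearIndependent ℝ
      (fun k : Fin n => fun x : Fin m → ℝ => |∑ i, u k i * x i| ^ p) := by
  by_contra hdep
  obtain ⟨w, k₀, hw, hwk₀, hsum⟩ := exists_nonneg_weights_of_not_linearIndependent hdep
  obtain ⟨n, rfl⟩ := Nat.exists_eq_succ_of_ne_zero k₀.pos.ne'
  have hreweighted := IsIsometricFrame.reweight hframe hp0.ne' hw hsum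
  refine hmin ⟨_, hreweighted.comp_succAbove hp0.ne' k₀ ?_⟩
  ext i
  simp [hwk₀, hp0.ne']

/-- If `n` is minimal such that a frame `(u k)` of an isometric embedding
`ℓ₂^m → ℓ_p^n` exists, then the functions `x ↦ |⟨u k, x⟩|^p` are linearly independent. -/
theorem stmt2 (m n p : ℕ) (hm : 2 ≤ m) (hp : Even p) (hp0 : 0 < p)
    (u : Fin n → Fin m → ℝ)
    (hframe : ∀ x : Fin m → ℝ,
      ∑ k, |∑ i, u k i * x i| ^ p = (∑ i, x i ^ 2) ^ (p / 2))
    (hmin : ¬ ∃ v : Fin (n - 1) → Fin m → ℝ,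
      ∀ x : Fin m → ℝ,
        ∑ k, |∑ i, v k i * x i| ^ p = (∑ i, x i ^ 2) ^ (p / 2)) :
    LinearIndependent ℝ
      (fun k : Fin n => fun x : Fin m → ℝ => |∑ i, u k i * x i| ^ p) :=
  stmt2_general m n p hp0 u hframe hmin
end

section
/- Suppose u_1,...,u_n ∈ ℝ^m satisfy ∑_{k=1}^n ⟨u_k,x⟩^p = ⟨x,x⟩^{p/2} for all x ∈ ℝ^m (p even), let μ_1,...,μ_m > 0, and let a_1,...,a_n ≥ 0 be real numbers with a_n = 0 such that (∑_{i=1}^m μ_i x_i²)^{p/2} = ∑_{k=1}^n a_k ⟨u_k,x⟩^p for all x. Then there exist vectors v_1,...,v_{n-1} ∈ ℝ^m with ∑_{k=1}^{n-1} ⟨v_k,z⟩^p = ⟨z,z⟩^{p/2} for all z ∈ ℝ^m. -/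
/-!
Substitute `x = D⁻¹ z` with `D = diag(√μ_i)` in the weighted identity: its left side becomes
`‖z‖^p`, and each weight `a_k ≥ 0` is absorbed into its vector as `a_k^{1/p}`, giving
`v_k = a_k^{1/p} D⁻¹ u_k`. The vector of weight `a_n = 0` contributes nothing and is dropped.
-/

open Finset

theorem Fin.sum_eq_sum_castLE_of_last_eq_zero {M : Type*} [AddCommMonoid M] {n : ℕ} (hn : 1 ≤ n)
    (f : Fin n → M) (hf : f ⟨n - 1, by omega⟩ = 0) :
    ∑ k, f k = ∑ k : Fin (n - 1), f (Fin.castLE (Nat.sub_le n 1) k) := by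
  obtain ⟨n, rfl⟩ : ∃ n', n = n' + 1 := ⟨n - 1, by omega⟩
  rw [Fin.sum_univ_castSucc, show Fin.last n = ⟨n + 1 - 1, by omega⟩ from Fin.ext (by simp), hf,
    add_zero]
  rfl

theorem sum_mul_div_sqrt_sq {σ : Type*} [Fintype σ] {μ : σ → ℝ} (hμ : ∀ i, 0 < μ i) (z : σ → ℝ) :
    ∑ i, μ i * (z i / √(μ i)) ^ 2 = ∑ i, z i ^ 2 := by
  refine sum_congr rfl fun i _ => ?_
  rw [div_pow, Real.sq_sqrt (hμ i).le, mul_div_cancel₀ _ (hμ i).ne']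

theorem exists_sum_pow_eq_of_sum_mul_pow_eq {ι σ : Type*} [Fintype ι] [Fintype σ] {p q : ℕ}
    (hp : p ≠ 0) {μ : σ → ℝ} (hμ : ∀ i, 0 < μ i) {c : ι → ℝ} (hc : ∀ k, 0 ≤ c k)
    {u : ι → σ → ℝ}
    (h : ∀ x : σ → ℝ, (∑ i, μ i * x i ^ 2) ^ q = ∑ k, c k * (∑ i, u k i * x i) ^ p) :
    ∃ v : ι → σ → ℝ, ∀ z : σ → ℝ, ∑ k, (∑ i, v k i * z i) ^ p = (∑ i, z i ^ 2) ^ q := by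
  refine ⟨fun k i => c k ^ (p⁻¹ : ℝ) * (u k i / √(μ i)), fun z => ?_⟩
  have hterm : ∀ k, (∑ i, c k ^ (p⁻¹ : ℝ) * (u k i / √(μ i)) * z i) ^ p
      = c k * (∑ i, u k i * (z i / √(μ i))) ^ p := fun k => by
    have hfactor : ∑ i, c k ^ (p⁻¹ : ℝ) * (u k i / √(μ i)) * z i
        = c k ^ (p⁻¹ : ℝ) * ∑ i, u k i * (z i / √(μ i)) := by
      rw [mul_sum]
      exact sum_congr rfl fun i _ => by ring
    rw [hfactor, mul_pow, Real.rpow_inv_natCast_pow (hc k) hp]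
  simp only [hterm]
  rw [← h, sum_mul_div_sqrt_sq hμ]

/-- If a frame identity holds and `(∑ μ_i x_i²)^(p/2) = ∑ a_k ⟨u_k,x⟩^p` with all
`a_k ≥ 0`, `μ_i > 0` and `a_n = 0`, then a frame with `n-1` vectors exists. -/
theorem stmt6 (m n p : ℕ) (hn : 1 ≤ n) (hp0 : 0 < p)
    (u : Fin n → Fin m → ℝ)
    (μ : Fin m → ℝ) (hμ : ∀ i, 0 < μ i)
    (a : Fin n → ℝ) (ha : ∀ k, 0 ≤ a k) (halast : a ⟨n - 1, by omega⟩ = 0)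
    (hid : ∀ x : Fin m → ℝ,
      (∑ i, μ i * x i ^ 2) ^ (p / 2) = ∑ k, a k * (∑ i, u k i * x i) ^ p) :
    ∃ v : Fin (n - 1) → Fin m → ℝ,
      ∀ z : Fin m → ℝ,
        ∑ k, (∑ i, v k i * z i) ^ p = (∑ i, z i ^ 2) ^ (p / 2) := by
  let castInit := Fin.castLE (Nat.sub_le n 1)
  refine exists_sum_pow_eq_of_sum_mul_pow_eq hp0.ne' hμ (c := a ∘ castInit) (fun k => ha _)
    (u := u ∘ castInit) fun x => ?_
  rw [hid, Fin.sum_eq_sum_castLE_of_last_eq_zero hn _ (by simp [halast])]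
  rfl
end

section
/- Let m ≥ 2 and let p be an even positive integer. If N denotes the minimal n such that there exist vectors u_1,...,u_n ∈ ℝ^m with ∑_{k=1}^n ⟨u_k,x⟩^p = ⟨x,x⟩^{p/2} for all x ∈ ℝ^m, then N ≤ C(m+p−1, p) − 1, i.e. N is strictly less than the dimension of the space of homogeneous polynomials of degree p in m variables. -/
/-!
The `p`-th powers of linear forms span a space `W` of dimension at most `C(m+p-1, p)` (that of
the degree-`p` forms) and, `p` being even, generate a salient cone in it. Take a representation
with `n ≥ dim W` terms. If its terms are linearly dependent, Carathéodory's argument removes one.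
Otherwise they form a basis `b₀, …, b_{n-1}` of `W`. The set of nonzero `p`-th powers is connected
(`m ≥ 2`), so moving from `b₀` to `b₁` inside it we meet a `t = ∑ tₖ bₖ` whose largest coordinate
`A` is attained at two indices; `A > 0` because the cone is salient. Then
`∑ bₖ = A⁻¹ t + ∑ (1 - A⁻¹ tₖ) bₖ` has nonnegative coefficients, two of which vanish, so it is a
sum of `n - 1` `p`-th powers.
-/

open Finset Module

section SumsOfGenerators

variable {V : Type*} [AddCommGroup V] {S : Set V}

def IsSumOf (S : Set V) (n : ℕ) (q : V) : Prop :=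
  ∃ s : Fin n → V, (∀ k, s k ∈ S) ∧ ∑ k, s k = q

lemma IsSumOf.cons {n : ℕ} {q t : V} (h : IsSumOf S n q) (ht : t ∈ S) :
    IsSumOf S (n + 1) (t + q) := by
  obtain ⟨s, hs, rfl⟩ := h
  exact ⟨Fin.cons t s, Fin.cases ht hs, Fin.sum_cons t s⟩

variable [Module ℝ V]

lemma isSumOf_sum_smul_of_eq_zero (hS : ∀ c : ℝ, 0 ≤ c → ∀ s ∈ S, c • s ∈ S) {n : ℕ}
    {c : Fin (n + 1) → ℝ} {s : Fin (n + 1) → V} (hc : ∀ k, 0 ≤ c k) (hs : ∀ k, s k ∈ S)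
    {j : Fin (n + 1)} (hj : c j = 0) : IsSumOf S n (∑ k, c k • s k) :=
  ⟨fun k => c (j.succAbove k) • s (j.succAbove k), fun k => hS _ (hc _) _ (hs _),
    by rw [Fin.sum_univ_succAbove _ j, hj, zero_smul, zero_add]⟩

lemma isSumOf_sum_of_not_linearIndependent (hS : ∀ c : ℝ, 0 ≤ c → ∀ s ∈ S, c • s ∈ S)
    {n : ℕ} {s : Fin (n + 1) → V} (hs : ∀ k, s k ∈ S) (hdep : ¬LinearIndependent ℝ s) :
    IsSumOf S n (∑ k, s k) := by
  obtain ⟨c, hc, i, hi⟩ : ∃ c : Fin (n + 1) → ℝ, ∑ k, c k • s k = 0 ∧ ∃ i, 0 < c i := by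
    obtain ⟨c, hc, i, hi⟩ := Fintype.not_linearIndependent_iff.mp hdep
    rcases hi.lt_or_gt with hi | hi
    · exact ⟨-c, by simp [neg_smul, sum_neg_distrib, hc], i, by simpa using hi⟩
    · exact ⟨c, hc, i, hi⟩
  obtain ⟨j, -, hj⟩ := exists_max_image univ c ⟨i, mem_univ i⟩
  have hcj : 0 < c j := hi.trans_le (hj i (mem_univ i))
  -- subtract the dependency, scaled so that the largest coefficient cancels
  have hsum : ∑ k, s k = ∑ k, (1 - c k / c j) • s k := by
    simp only [sub_smul, one_smul, sum_sub_distrib, div_eq_inv_mul, mul_smul, ← smul_sum, hc,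
      smul_zero, sub_zero]
  rw [hsum]
  refine isSumOf_sum_smul_of_eq_zero hS (fun k => ?_) hs (j := j) (by simp [hcj.ne'])
  rw [sub_nonneg, div_le_one hcj]
  exact hj k (mem_univ k)

variable [TopologicalSpace V] [IsTopologicalAddGroup V] [ContinuousSMul ℝ V] [T2Space V]
  [FiniteDimensional ℝ V]

lemma isSumOf_sum_basis (hS : ∀ c : ℝ, 0 ≤ c → ∀ s ∈ S, c • s ∈ S)
    (hconn : IsPreconnected (S \ {0})) (hsalient : ∀ t ∈ S, ∀ n, IsSumOf S n (-t) → t = 0)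
    {n : ℕ} (b : Basis (Fin (n + 2)) ℝ V) (hb : ∀ k, b k ∈ S) :
    IsSumOf S (n + 1) (∑ k, b k) := by
  set M : V → ℝ := fun t => univ.sup' univ_nonempty fun l : Fin (n + 1) => b.repr t l.succ
  have hcont : Continuous fun t => b.repr t 0 - M t :=
    (b.coord 0).continuous_of_finiteDimensional.sub <| Continuous.finset_sup'_apply _
      fun l _ => (b.coord l.succ).continuous_of_finiteDimensional
  have h0 : 0 ≤ b.repr (b 0) 0 - M (b 0) := by
    have : M (b 0) ≤ 0 := sup'_le _ _ fun l _ => by simp [b.repr_self]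
    simp only [b.repr_self, Finsupp.single_eq_same]
    linarith
  have h1 : b.repr (b 1) 0 - M (b 1) ≤ 0 := by
    have : 1 ≤ M (b 1) := le_trans (by simp [b.repr_self]) (le_sup' _ (mem_univ 0))
    rw [b.repr_self, Finsupp.single_eq_of_ne (by simp)]
    linarith
  obtain ⟨t, ⟨htS, ht0⟩, htM⟩ : ∃ t ∈ S \ {0}, b.repr t 0 - M t = 0 :=
    hconn.intermediate_value ⟨hb 1, b.ne_zero 1⟩ ⟨hb 0, b.ne_zero 0⟩ hcont.continuousOn ⟨h1, h0⟩
  -- so at `t` the maximal coordinate `A` is attained twice: at `0` and at `j.succ`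
  obtain ⟨j, -, hj⟩ := exists_mem_eq_sup' univ_nonempty fun l : Fin (n + 1) => b.repr t l.succ
  set A := b.repr t 0
  have hle : ∀ k, b.repr t k ≤ A :=
    Fin.cases le_rfl fun l => (le_sup' (fun l : Fin (n + 1) => b.repr t l.succ) (mem_univ l)).trans
      (by linarith)
  have hA : 0 < A := by
    by_contra! hA
    refine ht0 (hsalient t htS (n + 2) ⟨fun k => (-b.repr t k) • b k,
      fun k => hS _ (by linarith [hle k]) _ (hb k), ?_⟩)
    simp [neg_smul, sum_neg_distrib, b.sum_repr]
  have hsum : ∑ k, b k = A⁻¹ • t + ∑ l : Fin (n + 1), (1 - A⁻¹ * b.repr t l.succ) • b l.succ := by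
    have : ∑ k, b k = A⁻¹ • t + ∑ k, (1 - A⁻¹ * b.repr t k) • b k := by
      simp [sub_smul, mul_smul, ← smul_sum, b.sum_repr]
    rw [this, Fin.sum_univ_succ, inv_mul_cancel₀ hA.ne', sub_self, zero_smul, zero_add]
  rw [hsum]
  refine (isSumOf_sum_smul_of_eq_zero hS (fun l => ?_) (fun l => hb _) (j := j) ?_).cons
    (hS _ (inv_nonneg.2 hA.le) _ htS)
  · rw [sub_nonneg, inv_mul_le_one₀ hA]
    exact hle _
  · have hMt : M t = A := by linarith
    rw [← hj]
    change 1 - A⁻¹ * M t = 0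
    rw [hMt, inv_mul_cancel₀ hA.ne', sub_self]

lemma IsSumOf.pred (hS : ∀ c : ℝ, 0 ≤ c → ∀ s ∈ S, c • s ∈ S)
    (hconn : IsPreconnected (S \ {0})) (hsalient : ∀ t ∈ S, ∀ n, IsSumOf S n (-t) → t = 0)
    {n : ℕ} {q : V} (h : IsSumOf S (n + 2) q) (hn : finrank ℝ V ≤ n + 2) :
    IsSumOf S (n + 1) q := by
  obtain ⟨s, hs, rfl⟩ := h
  by_cases hind : LinearIndependent ℝ s
  · have hcard : Fintype.card (Fin (n + 2)) = finrank ℝ V :=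
      le_antisymm (by simpa using hind.fintype_card_le_finrank) (by simpa using hn)
    have := isSumOf_sum_basis hS hconn hsalient (basisOfLinearIndependentOfCardEqFinrank hind hcard)
      (by simpa [coe_basisOfLinearIndependentOfCardEqFinrank] using hs)
    rwa [coe_basisOfLinearIndependentOfCardEqFinrank] at this
  · exact isSumOf_sum_of_not_linearIndependent hS hs hind

lemma IsSumOf.exists_le_sub_one (hS : ∀ c : ℝ, 0 ≤ c → ∀ s ∈ S, c • s ∈ S)
    (hconn : IsPreconnected (S \ {0})) (hsalient : ∀ t ∈ S, ∀ n, IsSumOf S n (-t) → t = 0)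
    {D : ℕ} (hD : finrank ℝ V ≤ D) (hD2 : 2 ≤ D) {n : ℕ} {q : V} (h : IsSumOf S n q) :
    ∃ n' ≤ D - 1, IsSumOf S n' q := by
  induction n with
  | zero => exact ⟨0, Nat.zero_le _, h⟩
  | succ n ih =>
    by_cases hn : n + 1 ≤ D - 1
    · exact ⟨n + 1, hn, h⟩
    obtain ⟨k, rfl⟩ : ∃ k, n = k + 1 := ⟨n - 1, by omega⟩
    exact ih (h.pred hS hconn hsalient (by omega))

end SumsOfGenerators

section PowersOfLinearForms

open Submodule Set

variable {m : ℕ} (p : ℕ)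

def powLinearForm (u : Fin m → ℝ) : (Fin m → ℝ) → ℝ := fun x => (∑ i, u i * x i) ^ p

def monomialFun (s : Sym (Fin m) p) : (Fin m → ℝ) → ℝ := fun x => ((s : Multiset (Fin m)).map x).prod

lemma powLinearForm_mem_span_monomialFun (u : Fin m → ℝ) :
    powLinearForm p u ∈ span ℝ (range (monomialFun (m := m) p)) := by
  have hexpand : powLinearForm p u = ∑ g ∈ Fintype.piFinset fun _ : Fin p => (univ : Finset (Fin m)),
      (∏ j, u (g j)) • fun x : Fin m → ℝ => ∏ j, x (g j) := by
    funext x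
    rw [powLinearForm, ← Fin.prod_const, prod_univ_sum]
    simp [prod_mul_distrib]
  rw [hexpand]
  refine sum_mem fun g _ => smul_mem _ _ (subset_span ⟨⟨Multiset.map g univ.val, by simp⟩, ?_⟩)
  funext x
  change (Multiset.map x (Multiset.map g univ.val)).prod = _
  rw [Multiset.map_map, prod_eq_multiset_prod]
  rfl

lemma span_range_powLinearForm_le :
    span ℝ (range (powLinearForm (m := m) p)) ≤ span ℝ (range (monomialFun (m := m) p)) :=
  span_le.mpr (range_subset_iff.mpr (powLinearForm_mem_span_monomialFun p))

lemma finrank_span_range_powLinearForm_le :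
    finrank ℝ (span ℝ (range (powLinearForm (m := m) p))) ≤ (m + p - 1).choose p := by
  have := FiniteDimensional.span_of_finite ℝ (finite_range (monomialFun (m := m) p))
  calc finrank ℝ (span ℝ (range (powLinearForm (m := m) p)))
      ≤ finrank ℝ (span ℝ (range (monomialFun (m := m) p))) :=
        finrank_mono (span_range_powLinearForm_le p)
    _ ≤ Fintype.card (Sym (Fin m) p) := finrank_range_le_card _
    _ = (m + p - 1).choose p := by
        rw [Sym.card_sym_eq_multichoose, Nat.multichoose_eq, Fintype.card_fin]

lemma continuous_powLinearForm : Continuous (powLinearForm (m := m) p) :=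
  continuous_pi fun _ => (continuous_finsetSum _ fun i _ =>
    (continuous_apply i).mul continuous_const).pow p

lemma powLinearForm_smul (c : ℝ) (u : Fin m → ℝ) :
    powLinearForm p (c • u) = c ^ p • powLinearForm p u := by
  funext x
  simp only [powLinearForm, Pi.smul_apply, smul_eq_mul, ← mul_pow, mul_sum, mul_assoc]

lemma powLinearForm_zero (hp : p ≠ 0) : powLinearForm p (0 : Fin m → ℝ) = 0 := by
  funext x
  simp [powLinearForm, hp]

lemma powLinearForm_ne_zero {u : Fin m → ℝ} (hu : u ≠ 0) : powLinearForm p u ≠ 0 := by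
  have hpos : 0 < ∑ i, u i * u i := by
    obtain ⟨i, hi⟩ := Function.ne_iff.mp hu
    exact sum_pos' (fun j _ => mul_self_nonneg (u j)) ⟨i, mem_univ i, mul_self_pos.mpr hi⟩
  exact fun h => (pow_pos hpos p).ne' (congrFun h u)

lemma powLinearForm_nonneg (hp : Even p) (u x : Fin m → ℝ) : 0 ≤ powLinearForm p u x :=
  hp.pow_nonneg _

abbrev powLinearFormSpan (m p : ℕ) : Submodule ℝ ((Fin m → ℝ) → ℝ) :=
  span ℝ (range (powLinearForm (m := m) p))

instance : FiniteDimensional ℝ (powLinearFormSpan m p) :=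
  have := FiniteDimensional.span_of_finite ℝ (finite_range (monomialFun (m := m) p))
  finiteDimensional_of_le (span_range_powLinearForm_le p)

namespace powLinearFormSpan

def of (u : Fin m → ℝ) : powLinearFormSpan m p := ⟨powLinearForm p u, subset_span (mem_range_self u)⟩

lemma continuous_of : Continuous (of (m := m) p) :=
  (continuous_powLinearForm p).subtype_mk _

lemma smul_of (hp : p ≠ 0) {c : ℝ} (hc : 0 ≤ c) (u : Fin m → ℝ) :
    c • of p u = of p (c ^ (p : ℝ)⁻¹ • u) :=
  Subtype.ext <| by simp [of, powLinearForm_smul, Real.rpow_inv_natCast_pow hc hp]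

lemma of_eq_zero_iff (hp : p ≠ 0) {u : Fin m → ℝ} : of p u = 0 ↔ u = 0 := by
  refine ⟨fun h => by_contra fun hu => powLinearForm_ne_zero p hu (congrArg Subtype.val h), ?_⟩
  rintro rfl
  exact Subtype.ext (powLinearForm_zero p hp)

lemma isPreconnected_range_of_diff_zero (hm : 2 ≤ m) (hp : p ≠ 0) :
    IsPreconnected (range (of (m := m) p) \ {0}) := by
  have hrange : range (of (m := m) p) \ {0} = of p '' {0}ᶜ := by
    ext t
    constructor
    · rintro ⟨⟨u, rfl⟩, hu⟩
      exact ⟨u, fun h => hu (by simp [(of_eq_zero_iff p hp).mpr h]), rfl⟩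
    · rintro ⟨u, hu, rfl⟩
      exact ⟨mem_range_self u, (of_eq_zero_iff p hp).not.mpr hu⟩
  have hrank : 1 < Module.rank ℝ (Fin m → ℝ) := by
    rw [rank_fun', Fintype.card_fin]
    exact_mod_cast hm
  rw [hrange]
  exact (isConnected_compl_singleton_of_one_lt_rank hrank 0).isPreconnected.image _
    (continuous_of p).continuousOn

lemma eq_zero_of_isSumOf_neg (hp : Even p) {t : powLinearFormSpan m p} (ht : t ∈ range (of p))
    {n : ℕ} (h : IsSumOf (range (of p)) n (-t)) : t = 0 := by
  obtain ⟨w, rfl⟩ := ht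
  obtain ⟨s, hs, hsum⟩ := h
  choose u hu using hs
  have hx : ∀ x, powLinearForm p w x = -∑ k, powLinearForm p (u k) x := fun x => by
    have := congrArg (fun f : powLinearFormSpan m p => (f : (Fin m → ℝ) → ℝ) x) hsum
    simp only [Submodule.coe_sum, Finset.sum_apply, ← hu, of, Submodule.coe_neg, Pi.neg_apply] at this
    linarith
  -- `-t` is a sum of nonnegative functions, as is `t`
  refine Subtype.ext (funext fun x => le_antisymm ?_ (powLinearForm_nonneg p hp w x))
  rw [ZeroMemClass.coe_zero, Pi.zero_apply]
  change powLinearForm p w x ≤ 0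
  rw [hx, neg_nonpos]
  exact sum_nonneg fun k _ => powLinearForm_nonneg p hp _ x

end powLinearFormSpan

end PowersOfLinearForms

open powLinearFormSpan in
theorem exists_le_choose_sum_powLinearForm_eq {m p : ℕ} (hm : 2 ≤ m) (hp : Even p) (hp0 : p ≠ 0)
    {n : ℕ} (u : Fin n → Fin m → ℝ) :
    ∃ n' ≤ (m + p - 1).choose p - 1, ∃ u' : Fin n' → Fin m → ℝ,
      ∑ k, powLinearForm p (u' k) = ∑ k, powLinearForm p (u k) := by
  have hD : 2 ≤ (m + p - 1).choose p :=
    calc 2 ≤ (p + 1).choose p := by rw [Nat.choose_succ_self_right]; omega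
      _ ≤ (m + p - 1).choose p := Nat.choose_le_choose p (by omega)
  obtain ⟨n', hn', s, hs, hsum⟩ :=
    IsSumOf.exists_le_sub_one (by rintro c hc _ ⟨v, rfl⟩; exact ⟨_, (smul_of p hp0 hc v).symm⟩)
      (isPreconnected_range_of_diff_zero p hm hp0) (fun _ ht _ => eq_zero_of_isSumOf_neg p hp ht)
      (finrank_span_range_powLinearForm_le p) hD
      (q := ∑ k, of p (u k)) ⟨_, fun k => Set.mem_range_self _, rfl⟩
  choose u' hu' using hs
  refine ⟨n', hn', u', ?_⟩
  simpa [← hu', of] using congrArg Subtype.val hsum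

/-- Main theorem: the minimal `n` admitting an isometric embedding `ℓ₂^m → ℓ_p^n`
(for `p` even, `m ≥ 2`) satisfies `N ≤ C(m+p-1, p) - 1`, i.e. `N` is strictly less
than the dimension of the space of homogeneous polynomials of degree `p` in `m`
variables. -/
theorem stmt7 (m p N : ℕ) (hm : 2 ≤ m) (hp : Even p) (hp0 : 0 < p)
    (hN : IsLeast {n : ℕ | ∃ u : Fin n → Fin m → ℝ,
      ∀ x : Fin m → ℝ,
        ∑ k, (∑ i, u k i * x i) ^ p = (∑ i, x i ^ 2) ^ (p / 2)} N) :
    N ≤ Nat.choose (m + p - 1) p - 1 := by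
  obtain ⟨⟨u, hu⟩, hmin⟩ := hN
  obtain ⟨n', hn', u', hu'⟩ := exists_le_choose_sum_powLinearForm_eq hm hp hp0.ne' u
  refine (hmin ⟨u', fun x => ?_⟩).trans hn'
  simpa [powLinearForm, hu x] using congrFun hu' x
end

section
/- Let u_1,...,u_n ∈ ℝ^m (m ≥ 2, p even) satisfy ∑_{k=1}^n ⟨u_k,x⟩^p = ⟨x,x⟩^{p/2} for all x, and suppose a_1,...,a_n : ℝ^m → ℝ are continuous functions of (λ_1,...,λ_m) such that (∑_{i=1}^m λ_i x_i²)^{p/2} = ∑_{k=1}^n a_k(λ) ⟨u_k,x⟩^p for all x ∈ ℝ^m and all λ in the closed positive cone, with a_k(λ) ≥ 0 whenever all λ_i ≥ 0. If additionally ⟨u_k, e_1⟩ ≠ 0 for every k, then setting λ_1 = 0 and λ_2,...,λ_m > 0 forces a_k(0,λ_2,...,λ_m) = 0 for all k, contradicting the identity at x with x_2 ≠ 0; hence no such family (a_k) with all a_k(λ) ≥ 0 on the closed cone exists. -/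
/-!
Evaluating the identity at `λ = e₂` and `x = e₁` gives `0 = ∑ₖ aₖ(e₂) ⟨uₖ, e₁⟩ᵖ`. Every term is
nonnegative and `⟨uₖ, e₁⟩ᵖ > 0` because `p` is even, so all `aₖ(e₂)` vanish; evaluating at
`x = e₂` instead then gives `1 = 0`.
-/

section

variable {ι κ : Type*} [Fintype ι] [Fintype κ]

lemma eq_zero_of_sum_mul_even_pow_eq_zero {p : ℕ} (hp : Even p) {a c : κ → ℝ}
    (ha : ∀ k, 0 ≤ a k) (hc : ∀ k, c k ≠ 0) (h : ∑ k, a k * c k ^ p = 0) (k : κ) :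
    a k = 0 := by
  have hterm := (Finset.sum_eq_zero_iff_of_nonneg fun j _ =>
    mul_nonneg (ha j) (hp.pow_nonneg (c j))).mp h k (Finset.mem_univ k)
  exact (mul_eq_zero.mp hterm).resolve_right (hp.pow_pos (hc k)).ne'

lemma coeff_eq_zero_of_weight_eq_zero [DecidableEq ι] {p q : ℕ} (hp : Even p) (hq : q ≠ 0)
    {u : κ → ι → ℝ} {a : κ → ℝ} {lam : ι → ℝ} {j : ι}
    (ha : ∀ k, 0 ≤ a k) (hu : ∀ k, u k j ≠ 0) (hlam : lam j = 0)
    (hrepr : ∀ x : ι → ℝ,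
      (∑ i, lam i * x i ^ 2) ^ q = ∑ k, a k * (∑ i, u k i * x i) ^ p)
    (k : κ) : a k = 0 := by
  have hej := hrepr (Pi.single j 1)
  simp only [Pi.single_apply, mul_ite, mul_one, mul_zero, ite_pow, one_pow, zero_pow two_ne_zero,
    Finset.sum_ite_eq', Finset.mem_univ, if_true, hlam, zero_pow hq] at hej
  exact eq_zero_of_sum_mul_even_pow_eq_zero hp ha hu hej.symm k

end

/-- If `(u k)` is a frame with `⟨u k, e₁⟩ ≠ 0` for all `k`, then there is no family
of continuous coefficient functions `a k`, nonnegative on the closed positive cone,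
with `(∑ λ_i x_i²)^(p/2) = ∑ a k (λ) ⟨u k, x⟩^p` there. -/
theorem stmt9 (m n p : ℕ) (hm : 2 ≤ m) (hp : Even p) (hp0 : 0 < p)
    (u : Fin n → Fin m → ℝ)
    (he : ∀ k, u k ⟨0, by omega⟩ ≠ 0) :
    ¬ ∃ a : Fin n → (Fin m → ℝ) → ℝ,
        (∀ k, Continuous (a k)) ∧
        (∀ lam : Fin m → ℝ, (∀ i, 0 ≤ lam i) → ∀ k, 0 ≤ a k lam) ∧
        (∀ lam : Fin m → ℝ, (∀ i, 0 ≤ lam i) → ∀ x : Fin m → ℝ,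
          (∑ i, lam i * x i ^ 2) ^ (p / 2) = ∑ k, a k lam * (∑ i, u k i * x i) ^ p) := by
  rintro ⟨a, -, hnn, hid⟩
  set e₂ : Fin m → ℝ := Pi.single ⟨1, by omega⟩ 1
  have he₂ : 0 ≤ e₂ := Pi.single_nonneg.mpr zero_le_one
  have hp2 : p / 2 ≠ 0 := by obtain ⟨r, rfl⟩ := hp; omega
  have hvanish : ∀ k, a k e₂ = 0 :=
    coeff_eq_zero_of_weight_eq_zero hp hp2 (hnn e₂ he₂) he (by simp [e₂, Fin.ext_iff])
      (hid e₂ he₂)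
  have hone := hid e₂ he₂ e₂
  simp [e₂, hvanish, Pi.single_apply] at hone
end
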